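/- arXiv:2110.00311 — 4 statements merged into one kernel-verified Lean document; each statement's English description precedes it below -/
import Mathlib

section
/- Let q be a prime, (a_n) a multiplicative sequence with a_n = O(n^λ), and define F(s, 1/q) = ∑ a_n e(n/q) n^{-s}, L_f(s) = ∑ a_n n^{-s}, F_q(s) = ∑_{j≥0} a_{q^j} q^{-js}, and F(s,χ) = ∑ a_n χ(n) n^{-s}, all converging absolutely for Re(s) > 1 + λ. Then for Re(s) > 1 + λ: F(s, 1/q) = L_f(s) − (q/(q−1))·L_f(s)/F_q(s) + (1/(q−1))·∑_{χ mod q, χ≠χ₀} τ(χ̄)·F(s,χ), provided F_q(s) ≠ 0 (which holds for Re(s) sufficiently large by multiplicativity). -/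
open Complex Finset

/-- e(x) = exp(2πix) -/
noncomputable def eC (x : ℂ) : ℂ := Complex.exp (2 * Real.pi * Complex.I * x)

/-- Gauss sum of the conjugate character:
`τ(χ̄) = ∑_{b mod q} conj(χ(b)) e(b/q)`. -/
noncomputable def gaussSumConj (q : ℕ) [NeZero q] (χ : DirichletCharacter ℂ q) : ℂ :=
  ∑ b : ZMod q, (starRingEnd ℂ) (χ b) * eC ((b.val : ℂ) / q)

/-! For `q ∤ n`, expanding the additive character in Dirichlet characters gives
`(q - 1) e(n/q) = ∑_χ τ(χ̄) χ(n)`, and `τ(χ̄₀) = -1`; for `q ∣ n` both `e(n/q) = 1` and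
`χ(n) = 0`. Hence for every `n`
`e(n/q) = 1 - (q/(q-1)) χ₀(n) + (1/(q-1)) ∑_{χ ≠ χ₀} τ(χ̄) χ(n)`,
and summing against `a_n n^{-s}` gives the formula once the Euler factor at `q` is split off:
`∑ a_n χ₀(n) n^{-s} = L_f(s) / F_q(s)`. -/

lemma eC_natCast_div_eq_stdAddChar (q : ℕ) [NeZero q] (n : ℕ) :
    eC ((n : ℂ) / q) = ZMod.stdAddChar (n : ZMod q) := by
  rw [show ((n : ZMod q)) = ((n : ℤ) : ZMod q) by push_cast; rfl, ZMod.stdAddChar_coe, eC]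
  push_cast
  ring_nf

lemma gaussSumConj_eq_gaussSum_inv (q : ℕ) [NeZero q] (χ : DirichletCharacter ℂ q) :
    gaussSumConj q χ = gaussSum χ⁻¹ ZMod.stdAddChar := by
  refine Finset.sum_congr rfl fun b _ => ?_
  rw [← MulChar.star_apply', eC_natCast_div_eq_stdAddChar, ZMod.natCast_zmod_val]
  rfl

lemma DirichletCharacter.sum_gaussSum_inv_mul_apply {n : ℕ} [NeZero n]
    (ψ : AddChar (ZMod n) ℂ) {x : ZMod n} (hx : IsUnit x) :
    ∑ χ : DirichletCharacter ℂ n, gaussSum χ⁻¹ ψ * χ x = n.totient * ψ x := by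
  calc ∑ χ : DirichletCharacter ℂ n, gaussSum χ⁻¹ ψ * χ x
      = ∑ χ : DirichletCharacter ℂ n, gaussSum χ⁻¹ (ψ.mulShift x) := by
        refine Finset.sum_congr rfl fun χ _ => ?_
        rw [← hx.unit_spec, gaussSum_mulShift_eq, inv_inv, mul_comm]
    _ = ∑ χ : DirichletCharacter ℂ n, gaussSum χ (ψ.mulShift x) :=
        Fintype.sum_equiv (Equiv.inv _) _ _ fun _ => rfl
    _ = ∑ b, (∑ χ : DirichletCharacter ℂ n, χ b) * ψ (x * b) := by
        simp only [gaussSum, Finset.sum_mul, AddChar.mulShift_apply]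
        exact Finset.sum_comm
    _ = n.totient * ψ x := by
        simp [DirichletCharacter.sum_characters_eq]

lemma ZMod.stdAddChar_ne_one {q : ℕ} [NeZero q] (hq : q ≠ 1) :
    (ZMod.stdAddChar : AddChar (ZMod q) ℂ) ≠ 1 := by
  intro h
  have := ZMod.injective_stdAddChar (N := q) (a₁ := 1) (a₂ := 0) (by simp [h])
  exact hq (ZMod.one_eq_zero_iff.mp this)

lemma ZMod.addChar_apply_eq_sum_gaussSum_mul_char {p : ℕ} [Fact p.Prime]
    {ψ : AddChar (ZMod p) ℂ} (hψ : ψ ≠ 1) (x : ZMod p) :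
    ψ x = 1 - (p / (p - 1) : ℂ) * (1 : DirichletCharacter ℂ p) x
      + 1 / (p - 1 : ℂ) * ∑ χ ∈ univ.filter (fun χ : DirichletCharacter ℂ p => χ ≠ 1),
          gaussSum χ⁻¹ ψ * χ x := by
  have hp1 : (p - 1 : ℂ) ≠ 0 := sub_ne_zero.mpr (mod_cast (Fact.out : p.Prime).one_lt.ne')
  rcases eq_or_ne x 0 with rfl | hx
  · simp [MulChar.map_zero]
  have hx : IsUnit x := hx.isUnit
  have hsum := DirichletCharacter.sum_gaussSum_inv_mul_apply ψ hx
  rw [← Finset.add_sum_erase _ _ (Finset.mem_univ 1), inv_one, gaussSum_one_left hψ,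
    MulChar.one_apply hx, Nat.totient_prime Fact.out] at hsum
  rw [Finset.filter_ne', MulChar.one_apply hx, eq_sub_of_add_eq' hsum]
  push_cast [(Fact.out : p.Prime).one_le]
  field_simp
  ring

lemma LSeries_eq_tsum_succ (f : ℕ → ℂ) (s : ℂ) :
    LSeries f s = ∑' n : ℕ, f (n + 1) * ((n + 1 : ℕ) : ℂ) ^ (-s) := by
  rw [LSeries, ← tsum_pnat_eq_tsum_of_eq_zero (LSeries.term_zero f s), tsum_pnat_eq_tsum_succ]
  refine tsum_congr fun n => ?_
  rw [LSeries.term_of_ne_zero n.succ_ne_zero, cpow_neg, div_eq_mul_inv]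

lemma LSeriesSummable.mul_of_norm_le_one {f w : ℕ → ℂ} {s : ℂ} (hf : LSeriesSummable f s)
    (hw : ∀ n, ‖w n‖ ≤ 1) : LSeriesSummable (fun n => f n * w n) s := by
  refine Summable.of_norm_bounded (summable_norm_iff.mpr hf) fun n => LSeries.norm_term_le s ?_
  rw [norm_mul]
  exact mul_le_of_le_one_right (norm_nonneg _) (hw n)

lemma LSeries_mul_addChar_eq {p : ℕ} [Fact p.Prime] {ψ : AddChar (ZMod p) ℂ} (hψ : ψ ≠ 1)
    {a : ℕ → ℂ} {s : ℂ} (ha : LSeriesSummable a s) :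
    LSeries (fun n => a n * ψ n) s = LSeries a s
      - (p / (p - 1) : ℂ) * LSeries (fun n => a n * (1 : DirichletCharacter ℂ p) n) s
      + 1 / (p - 1 : ℂ) * ∑ χ ∈ univ.filter (fun χ : DirichletCharacter ℂ p => χ ≠ 1),
          gaussSum χ⁻¹ ψ * LSeries (fun n => a n * χ n) s := by
  have hχ (χ : DirichletCharacter ℂ p) :
      LSeriesHasSum (fun n => a n * χ n) s (LSeries (fun n => a n * χ n) s) :=
    (ha.mul_of_norm_le_one fun n => χ.norm_le_one _).LSeriesHasSum
  refine LSeriesHasSum.LSeries_eq ((LSeriesHasSum_congr _ _ fun {n} _ => ?_).mp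
    ((ha.LSeriesHasSum.sub ((hχ 1).smul _)).add
      ((LSeriesHasSum.sum fun χ _ => (hχ χ).smul (gaussSum χ⁻¹ ψ)).smul _)))
  rw [ZMod.addChar_apply_eq_sum_gaussSum_mul_char hψ]
  simp only [Pi.add_apply, Pi.sub_apply, Pi.smul_apply, Finset.sum_apply, smul_eq_mul,
    mul_add, mul_sub, Finset.mul_sum]
  ring_nf

lemma Nat.factorization_pow_mul_of_coprime {p j m : ℕ} (hp : p.Prime) (hm : m.Coprime p) :
    (p ^ j * m).factorization p = j := by
  have hm0 : m ≠ 0 := by rintro rfl; exact hp.ne_one (Nat.coprime_zero_left p |>.mp hm)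
  rw [Nat.factorization_mul (pow_ne_zero j hp.ne_zero) hm0, Finsupp.add_apply,
    hp.factorization_pow, Finsupp.single_eq_same,
    Nat.factorization_eq_zero_of_not_dvd ((hp.coprime_iff_not_dvd).mp hm.symm), add_zero]

lemma Nat.injective_pow_mul_coprime {p : ℕ} (hp : p.Prime) :
    Function.Injective fun x : ℕ × {m : ℕ | m.Coprime p} => p ^ x.1 * x.2 := by
  rintro ⟨j, m, hm⟩ ⟨k, n, hn⟩ h
  dsimp only at h
  obtain rfl : j = k := by
    rw [← Nat.factorization_pow_mul_of_coprime (j := j) hp hm, h,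
      Nat.factorization_pow_mul_of_coprime hp hn]
  obtain rfl : m = n := Nat.eq_of_mul_eq_mul_left (pow_pos hp.pos j) h
  rfl

theorem tsum_eq_tsum_pow_mul_tsum_coprime {R : Type*} [NormedRing R] [CompleteSpace R]
    {f : ℕ → R} {p : ℕ} (hp : p.Prime) (hmul : ∀ m n, m.Coprime n → f (m * n) = f m * f n)
    (hf : Summable (‖f ·‖)) (hf0 : f 0 = 0) :
    ∑' n, f n = (∑' j, f (p ^ j)) * ∑' m : {m : ℕ | m.Coprime p}, f m := by
  rw [tsum_mul_tsum_of_summable_norm (hf.comp_injective (Nat.pow_right_injective hp.two_le))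
    (hf.comp_injective Subtype.val_injective)]
  have hsupp : Function.support f ⊆
      Set.range fun x : ℕ × {m : ℕ | m.Coprime p} => p ^ x.1 * x.2 := by
    intro n hn
    have hn0 : n ≠ 0 := by rintro rfl; exact hn hf0
    exact ⟨⟨n.factorization p, _, (Nat.coprime_ordCompl hp hn0).symm⟩,
      Nat.ordProj_mul_ordCompl_eq_self n p⟩
  rw [← (Nat.injective_pow_mul_coprime hp).tsum_eq hsupp]
  exact tsum_congr fun ⟨j, m, hm⟩ => hmul _ _ (hm.symm.pow_left j)

lemma LSeries.term_mul_of_coprime {a : ℕ → ℂ} (hmul : ∀ m n, m.Coprime n → a (m * n) = a m * a n)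
    (s : ℂ) {m n : ℕ} (hmn : m.Coprime n) :
    LSeries.term a s (m * n) = LSeries.term a s m * LSeries.term a s n := by
  rcases eq_or_ne m 0 with rfl | hm
  · simp
  rcases eq_or_ne n 0 with rfl | hn
  · simp
  rw [LSeries.term_of_ne_zero (mul_ne_zero hm hn), LSeries.term_of_ne_zero hm,
    LSeries.term_of_ne_zero hn, hmul m n hmn, Nat.cast_mul, natCast_mul_natCast_cpow,
    mul_div_mul_comm]

lemma LSeries_eq_tsum_term_pow_mul_LSeries_mul_one {p : ℕ} [Fact p.Prime] {a : ℕ → ℂ} {s : ℂ}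
    (hmul : ∀ m n, m.Coprime n → a (m * n) = a m * a n) (ha : LSeriesSummable a s) :
    LSeries a s = (∑' j, LSeries.term a s (p ^ j)) *
      LSeries (fun n => a n * (1 : DirichletCharacter ℂ p) n) s := by
  rw [LSeries, tsum_eq_tsum_pow_mul_tsum_coprime (p := p) Fact.out
    (fun _ _ => LSeries.term_mul_of_coprime hmul s) (summable_norm_iff.mpr ha)
    (LSeries.term_zero a s), LSeries, tsum_subtype {m : ℕ | m.Coprime p}]
  congr 1
  refine tsum_congr fun n => ?_
  by_cases hn : n.Coprime p
  · rw [Set.indicator_of_mem (s := {m : ℕ | m.Coprime p}) hn]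
    simp [LSeries.term_def, MulChar.one_apply ((ZMod.isUnit_iff_coprime n p).mpr hn)]
  · rw [Set.indicator_of_notMem (s := {m : ℕ | m.Coprime p}) hn]
    simp [LSeries.term_def, MulChar.map_nonunit _ (mt (ZMod.isUnit_iff_coprime n p).mp hn)]

theorem additive_twist_decomposition_general (q : ℕ) (hq : q.Prime) (a : ℕ → ℂ)
    (hmul : ∀ m n : ℕ, Nat.Coprime m n → a (m * n) = a m * a n)
    (C lam : ℝ)
    (hgrowth : ∀ n : ℕ, 1 ≤ n → ‖a n‖ ≤ C * (n : ℝ) ^ lam)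
    (s : ℂ) (hs : 1 + lam < s.re)
    (hFq : (∑' j : ℕ, a (q ^ j) * (q : ℂ) ^ (-(j : ℂ) * s)) ≠ 0) :
    haveI : NeZero q := ⟨hq.ne_zero⟩
    (∑' n : ℕ, a (n + 1) * eC (((n + 1 : ℕ) : ℂ) / q) * ((n + 1 : ℕ) : ℂ) ^ (-s)) =
      (∑' n : ℕ, a (n + 1) * ((n + 1 : ℕ) : ℂ) ^ (-s))
        - ((q : ℂ) / ((q : ℂ) - 1)) *
            (∑' n : ℕ, a (n + 1) * ((n + 1 : ℕ) : ℂ) ^ (-s)) /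
            (∑' j : ℕ, a (q ^ j) * (q : ℂ) ^ (-(j : ℂ) * s))
        + (1 / ((q : ℂ) - 1)) *
            ∑ χ ∈ Finset.univ.filter (fun χ : DirichletCharacter ℂ q => χ ≠ 1),
              gaussSumConj q χ *
                ∑' n : ℕ, a (n + 1) * χ ((n + 1 : ℕ) : ZMod q) *
                  ((n + 1 : ℕ) : ℂ) ^ (-s) := by
  have : Fact q.Prime := ⟨hq⟩
  have ha : LSeriesSummable a s := LSeriesSummable_of_le_const_mul_rpow hs
    ⟨C, fun n hn => by simpa using hgrowth n (Nat.one_le_iff_ne_zero.mpr hn)⟩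
  have hFq_eq : ∑' j : ℕ, a (q ^ j) * (q : ℂ) ^ (-(j : ℂ) * s) =
      ∑' j : ℕ, LSeries.term a s (q ^ j) := by
    refine tsum_congr fun j => ?_
    rw [LSeries.term_of_ne_zero (pow_ne_zero j hq.ne_zero), div_eq_mul_inv, ← cpow_neg,
      neg_mul, ← mul_neg, natCast_cpow_natCast_mul, Nat.cast_pow]
  have hL₀ : LSeries (fun n => a n * (1 : DirichletCharacter ℂ q) n) s =
      LSeries a s / ∑' j : ℕ, a (q ^ j) * (q : ℂ) ^ (-(j : ℂ) * s) := by
    rw [hFq_eq, LSeries_eq_tsum_term_pow_mul_LSeries_mul_one (p := q) hmul ha,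
      mul_div_cancel_left₀ _ (hFq_eq ▸ hFq)]
  have hdecomp := LSeries_mul_addChar_eq (ZMod.stdAddChar_ne_one hq.ne_one) ha
  rw [hL₀, ← mul_div_assoc] at hdecomp
  simpa only [LSeries_eq_tsum_succ, ← eC_natCast_div_eq_stdAddChar,
    ← gaussSumConj_eq_gaussSum_inv] using hdecomp

/-- For `(a_n)` multiplicative with `|a_n| ≤ C n^λ` and `q` prime, with
`F(s,1/q) = ∑ a_n e(n/q) n^{-s}`, `L_f(s) = ∑ a_n n^{-s}`,
`F_q(s) = ∑_j a_{q^j} q^{-js}`, `F(s,χ) = ∑ a_n χ(n) n^{-s}`, for `Re(s) > 1+λ`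
(with `F_q(s) ≠ 0`):
`F(s,1/q) = L_f(s) − (q/(q−1))·L_f(s)/F_q(s) + (1/(q−1))·∑_{χ≠χ₀} τ(χ̄) F(s,χ)`. -/
theorem additive_twist_decomposition (q : ℕ) (hq : q.Prime) (a : ℕ → ℂ)
    (ha1 : a 1 = 1)
    (hmul : ∀ m n : ℕ, Nat.Coprime m n → a (m * n) = a m * a n)
    (C lam : ℝ) (hC : 0 < C) (hlam : 0 < lam)
    (hgrowth : ∀ n : ℕ, 1 ≤ n → ‖a n‖ ≤ C * (n : ℝ) ^ lam)
    (s : ℂ) (hs : 1 + lam < s.re)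
    (hFq : (∑' j : ℕ, a (q ^ j) * (q : ℂ) ^ (-(j : ℂ) * s)) ≠ 0) :
    haveI : NeZero q := ⟨hq.ne_zero⟩
    (∑' n : ℕ, a (n + 1) * eC (((n + 1 : ℕ) : ℂ) / q) * ((n + 1 : ℕ) : ℂ) ^ (-s)) =
      (∑' n : ℕ, a (n + 1) * ((n + 1 : ℕ) : ℂ) ^ (-s))
        - ((q : ℂ) / ((q : ℂ) - 1)) *
            (∑' n : ℕ, a (n + 1) * ((n + 1 : ℕ) : ℂ) ^ (-s)) /
            (∑' j : ℕ, a (q ^ j) * (q : ℂ) ^ (-(j : ℂ) * s))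
        + (1 / ((q : ℂ) - 1)) *
            ∑ χ ∈ Finset.univ.filter (fun χ : DirichletCharacter ℂ q => χ ≠ 1),
              gaussSumConj q χ *
                ∑' n : ℕ, a (n + 1) * χ ((n + 1 : ℕ) : ZMod q) *
                  ((n + 1 : ℕ) : ℂ) ^ (-s) :=
  additive_twist_decomposition_general q hq a hmul C lam hgrowth s hs hFq
end

section
/- Let (a_n) be multiplicative with a_n = O(n^λ) and let q be a prime. If the Dirichlet series F_q(s) = ∑_{j≥0} a_{q^j} q^{-js} extends to a holomorphic, nonvanishing function on Re(s) ≥ 1/2, then the formal power series E_q(z) with E_q(q^{-s}) = 1/F_q(s) has radius of convergence at least q^{-1/2}. -/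
/-!
Since `s ↦ q ^ (-s)` is periodic with period `2πi / log q`, so is `G` on the half-plane
`re s > 1 + λ`, where it is the Euler factor `F(y) = ∑ a_{q^j} y ^ j` evaluated at `y = q ^ (-s)`;
by the identity theorem `G` is then periodic on all of `re s > 1/2`. Hence `G` descends to a
holomorphic, nonvanishing function `H` of `y = q ^ (-s)` on the punctured disc
`0 < |y| < q ^ (-1/2)`. Near `y = 0` it agrees with `F`, which converges there by the growth bound,
so `H` is holomorphic on the whole disc, and so is `1 / H`. Its Taylor coefficients form the
formal inverse of `(a_{q^j})`, which is `E`, and they converge absolutely on the disc.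
-/

open Complex

open Filter Topology FormalMultilinearSeries

theorem PowerSeries.mk_mul_mk_eq_one_iff {R : Type*} [Semiring R] (u v : ℕ → R) :
    PowerSeries.mk u * PowerSeries.mk v = 1 ↔
      ∀ n, ∑ i ∈ Finset.range (n + 1), u i * v (n - i) = if n = 0 then 1 else 0 := by
  simp only [PowerSeries.ext_iff, PowerSeries.coeff_mul, PowerSeries.coeff_one,
    PowerSeries.coeff_mk, Finset.Nat.sum_antidiagonal_eq_sum_range_succ (fun i j => u i * v j)]

section NormedField

variable {𝕜 : Type*} [NontriviallyNormedField 𝕜]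

theorem FormalMultilinearSeries.summable_norm_coeff_mul_pow {E : Type*} [NormedAddCommGroup E]
    [NormedSpace 𝕜 E] (p : FormalMultilinearSeries 𝕜 𝕜 E) {z : 𝕜} (hz : ‖z‖₊ < p.radius) :
    Summable fun n => ‖p.coeff n‖ * ‖z‖ ^ n := by
  simpa only [norm_apply_eq_norm_coef, coe_nnnorm] using p.summable_norm_mul_pow hz

theorem FormalMultilinearSeries.ofScalars_radius_pos_of_norm_le {c : ℕ → 𝕜} {C K : ℝ}
    (hK : 0 < K) (hc : ∀ n, ‖c n‖ ≤ C * K ^ n) : 0 < (ofScalars 𝕜 c).radius := by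
  lift K to NNReal using hK.le
  refine lt_of_lt_of_le (by simpa using hK)
    ((ofScalars 𝕜 c).le_radius_of_bound C (r := K⁻¹) fun n => ?_)
  rw [ofScalars_norm, NNReal.coe_inv, inv_pow, ← div_eq_mul_inv, div_le_iff₀ (by positivity)]
  exact hc n

theorem HasFPowerSeriesAt.eventually_hasSum_and_summable_norm {f : 𝕜 → 𝕜}
    {p : FormalMultilinearSeries 𝕜 𝕜 𝕜} (hf : HasFPowerSeriesAt f p 0) :
    ∀ᶠ z in 𝓝 0, HasSum (fun n => z ^ n * p.coeff n) (f z) ∧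
      Summable fun n => ‖z ^ n * p.coeff n‖ := by
  filter_upwards [hasFPowerSeriesAt_iff.mp hf, Metric.eball_mem_nhds (0 : 𝕜) hf.radius_pos]
    with z hsum hz
  rw [Metric.mem_eball, edist_zero_right] at hz
  refine ⟨by simpa only [zero_add, smul_eq_mul] using hsum, ?_⟩
  simpa only [norm_mul, norm_pow, mul_comm] using p.summable_norm_coeff_mul_pow hz

theorem PowerSeries.mk_coeff_mul_mk_coeff_eq_one [CompleteSpace 𝕜] {f g : 𝕜 → 𝕜}
    {p r : FormalMultilinearSeries 𝕜 𝕜 𝕜} (hf : HasFPowerSeriesAt f p 0)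
    (hg : HasFPowerSeriesAt g r 0) (hfg : ∀ᶠ z in 𝓝 0, f z * g z = 1) :
    PowerSeries.mk p.coeff * PowerSeries.mk r.coeff = 1 := by
  set conv : ℕ → 𝕜 := fun n => ∑ i ∈ Finset.range (n + 1), p.coeff i * r.coeff (n - i)
  have hone : HasFPowerSeriesAt (fun _ => (1 : 𝕜)) (ofScalars 𝕜 conv) 0 := by
    rw [hasFPowerSeriesAt_iff]
    filter_upwards [hfg, hf.eventually_hasSum_and_summable_norm,
      hg.eventually_hasSum_and_summable_norm] with z hfgz ⟨hfz, hpz⟩ ⟨hgz, hrz⟩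
    have hterm : ∀ n, ∑ i ∈ Finset.range (n + 1),
        z ^ i * p.coeff i * (z ^ (n - i) * r.coeff (n - i)) =
          z ^ n • (ofScalars 𝕜 conv).coeff n := by
      intro n
      rw [coeff_ofScalars, smul_eq_mul, Finset.mul_sum]
      refine Finset.sum_congr rfl fun i hi => ?_
      rw [← Nat.add_sub_cancel' (Finset.mem_range_succ_iff.mp hi)]
      simp only [Nat.add_sub_cancel_left, pow_add]
      ring
    simpa only [hterm, hfz.tsum_eq, hgz.tsum_eq, hfgz]
      using hasSum_sum_range_mul_of_summable_norm hpz hrz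
  have hconst := hone.eq_formalMultilinearSeries (hasFPowerSeriesAt_const (c := (1 : 𝕜)))
  refine (PowerSeries.mk_mul_mk_eq_one_iff _ _).mpr fun n => ?_
  have hcoeff := congr_arg (fun s => s.coeff n) hconst
  simp only [coeff_ofScalars] at hcoeff
  refine hcoeff.trans ?_
  cases n <;> simp [FormalMultilinearSeries.coeff]

end NormedField

namespace Complex

variable {b : ℝ}

theorem norm_ofReal_cpow_neg_lt_iff (hb : 1 < b) {s : ℂ} {σ : ℝ} :
    ‖(b : ℂ) ^ (-s)‖ < b ^ (-σ) ↔ σ < s.re := by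
  rw [norm_cpow_eq_rpow_re_of_pos (by linarith), neg_re, Real.rpow_lt_rpow_left_iff hb,
    neg_lt_neg_iff]

theorem ofReal_cpow_neg_eq_iff (hb : 1 < b) {s₁ s₂ : ℂ} :
    (b : ℂ) ^ (-s₁) = (b : ℂ) ^ (-s₂) ↔
      ∃ k : ℤ, s₁ = s₂ + k * (2 * Real.pi * I / Real.log b) := by
  have hb0 : (b : ℂ) ≠ 0 := ofReal_ne_zero.mpr (by linarith)
  have hL : (Real.log b : ℂ) ≠ 0 := ofReal_ne_zero.mpr (Real.log_pos hb).ne'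
  rw [cpow_def_of_ne_zero hb0, cpow_def_of_ne_zero hb0, exp_eq_exp_iff_exists_int,
    ← ofReal_log (by linarith)]
  constructor
  · rintro ⟨n, hn⟩
    refine ⟨-n, ?_⟩
    field_simp
    push_cast
    linear_combination -hn
  · rintro ⟨k, rfl⟩
    refine ⟨-k, ?_⟩
    field_simp
    push_cast
    ring

noncomputable def negLogBase (b : ℝ) (y : ℂ) : ℂ := -log y / Real.log b

theorem cpow_neg_negLogBase (hb : 1 < b) {y : ℂ} (hy : y ≠ 0) :
    (b : ℂ) ^ (-negLogBase b y) = y := by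
  have hL : (Real.log b : ℂ) ≠ 0 := ofReal_ne_zero.mpr (Real.log_pos hb).ne'
  rw [cpow_def_of_ne_zero (ofReal_ne_zero.mpr (by linarith)), ← ofReal_log (by linarith),
    negLogBase, neg_div, neg_neg, mul_div_cancel₀ _ hL, exp_log hy]

/- `w ↦ negLogBase b y + negLogBase b (w / y)` is a branch of the inverse of `s ↦ b ^ (-s)` that
is holomorphic near `y` even when `y` lies on the cut of `log`. -/
theorem cpow_neg_negLogBase_add_negLogBase_div (hb : 1 < b) {y w : ℂ} (hy : y ≠ 0)
    (hw : w ≠ 0) : (b : ℂ) ^ (-(negLogBase b y + negLogBase b (w / y))) = w := by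
  rw [neg_add, cpow_add _ _ (ofReal_ne_zero.mpr (by linarith)), cpow_neg_negLogBase hb hy,
    cpow_neg_negLogBase hb (div_ne_zero hw hy), mul_div_cancel₀ _ hy]

theorem differentiableAt_negLogBase_add_negLogBase_div {y : ℂ} (hy : y ≠ 0) :
    DifferentiableAt ℂ (fun w => negLogBase b y + negLogBase b (w / y)) y := by
  have hslit : y / y ∈ slitPlane := by rw [div_self hy]; exact one_mem_slitPlane
  unfold negLogBase
  fun_prop (disch := assumption)

theorem _root_.AnalyticOnNhd.apply_add_eq_of_forall_re_gt {G : ℂ → ℂ} {σ σ' : ℝ} {T : ℂ}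
    (hT : T.re = 0) (hG : AnalyticOnNhd ℂ G {s | σ < s.re})
    (hper : ∀ s, σ' < s.re → G (s + T) = G s) {s : ℂ} (hs : σ < s.re) :
    G (s + T) = G s := by
  have hshift : AnalyticOnNhd ℂ (fun s => G (s + T)) {s | σ < s.re} := fun s hs =>
    (hG (s + T) (by simpa [hT] using hs)).comp (f := fun s => s + T) (by fun_prop)
  set s₀ : ℂ := ((max σ σ' + 1 : ℝ) : ℂ)
  have hs₀ : σ < s₀.re := by simp only [s₀, ofReal_re]; linarith [le_max_left σ σ']
  have hs₀' : σ' < s₀.re := by simp only [s₀, ofReal_re]; linarith [le_max_right σ σ']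
  refine hshift.eqOn_of_preconnected_of_eventuallyEq hG
    (convex_halfSpace_re_gt σ).isPreconnected hs₀ ?_ hs
  filter_upwards [(isOpen_lt continuous_const continuous_re).mem_nhds hs₀'] with s hs
    using hper s hs

theorem eq_of_cpow_neg_eq (hb : 1 < b) {G F : ℂ → ℂ} {σ σ' : ℝ}
    (hG : AnalyticOnNhd ℂ G {s | σ < s.re}) (hGF : ∀ s, σ' < s.re → G s = F ((b : ℂ) ^ (-s)))
    {s₁ s₂ : ℂ} (h₁ : σ < s₁.re) (h₂ : σ < s₂.re) (h : (b : ℂ) ^ (-s₁) = (b : ℂ) ^ (-s₂)) :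
    G s₁ = G s₂ := by
  obtain ⟨k, rfl⟩ := (ofReal_cpow_neg_eq_iff hb).mp h
  refine hG.apply_add_eq_of_forall_re_gt (σ' := σ') (by simp [div_ofReal_re]) (fun s hs => ?_) h₂
  have hre : σ' < (s + k * (2 * Real.pi * I / Real.log b)).re := by
    simpa [div_ofReal_re] using hs
  rw [hGF _ hs, hGF _ hre, (ofReal_cpow_neg_eq_iff hb).mpr ⟨k, rfl⟩]

/-- `G` as a function of `y = b ^ (-s)`; at `y = 0`, where no such `s` exists, it takes the
value `F 0`. -/
noncomputable def cpowNegDescent (b : ℝ) (F G : ℂ → ℂ) (y : ℂ) : ℂ :=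
  if y = 0 then F 0 else G (negLogBase b y)

section Descent

variable (hb : 1 < b) {F G : ℂ → ℂ} {σ σ' : ℝ}

include hb in
theorem cpowNegDescent_ne_zero (hF : F 0 ≠ 0) (hGne : ∀ s, σ < s.re → G s ≠ 0) {y : ℂ}
    (hy : ‖y‖ < b ^ (-σ)) : cpowNegDescent b F G y ≠ 0 := by
  rcases eq_or_ne y 0 with rfl | hy0
  · simpa [cpowNegDescent] using hF
  rw [cpowNegDescent, if_neg hy0]
  exact hGne _ (by rwa [← norm_ofReal_cpow_neg_lt_iff hb, cpow_neg_negLogBase hb hy0])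

variable (hGF : ∀ s, σ' < s.re → G s = F ((b : ℂ) ^ (-s)))
include hb hGF

theorem cpowNegDescent_eq_of_norm_lt {y : ℂ} (hy : ‖y‖ < b ^ (-σ')) :
    cpowNegDescent b F G y = F y := by
  rcases eq_or_ne y 0 with rfl | hy0
  · simp [cpowNegDescent]
  rw [cpowNegDescent, if_neg hy0, hGF, cpow_neg_negLogBase hb hy0]
  rwa [← norm_ofReal_cpow_neg_lt_iff hb, cpow_neg_negLogBase hb hy0]

variable (hG : AnalyticOnNhd ℂ G {s | σ < s.re})
include hG

theorem cpowNegDescent_eventuallyEq {y : ℂ} (hy0 : y ≠ 0) (hy : ‖y‖ < b ^ (-σ)) :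
    cpowNegDescent b F G =ᶠ[𝓝 y] fun w => G (negLogBase b y + negLogBase b (w / y)) := by
  have hU : IsOpen {w : ℂ | w ≠ 0 ∧ ‖w‖ < b ^ (-σ)} :=
    isOpen_ne.inter (isOpen_lt continuous_norm continuous_const)
  filter_upwards [hU.mem_nhds ⟨hy0, hy⟩] with w ⟨hw0, hw⟩
  rw [cpowNegDescent, if_neg hw0]
  refine eq_of_cpow_neg_eq hb hG hGF ?_ ?_ ?_
  · rwa [← norm_ofReal_cpow_neg_lt_iff hb, cpow_neg_negLogBase hb hw0]
  · rwa [← norm_ofReal_cpow_neg_lt_iff hb, cpow_neg_negLogBase_add_negLogBase_div hb hy0 hw0]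
  · rw [cpow_neg_negLogBase hb hw0, cpow_neg_negLogBase_add_negLogBase_div hb hy0 hw0]

theorem differentiableOn_cpowNegDescent (hF : DifferentiableAt ℂ F 0) :
    DifferentiableOn ℂ (cpowNegDescent b F G) (Metric.ball 0 (b ^ (-σ))) := by
  intro y hy
  rw [mem_ball_zero_iff] at hy
  refine DifferentiableAt.differentiableWithinAt ?_
  rcases eq_or_ne y 0 with rfl | hy0
  · refine hF.congr_of_eventuallyEq ?_
    filter_upwards [Metric.ball_mem_nhds (0 : ℂ) (Real.rpow_pos_of_pos (by linarith : 0 < b) (-σ'))]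
      with w hw using cpowNegDescent_eq_of_norm_lt hb hGF (mem_ball_zero_iff.mp hw)
  refine DifferentiableAt.congr_of_eventuallyEq ?_ (cpowNegDescent_eventuallyEq hb hGF hG hy0 hy)
  refine (hG _ ?_).differentiableAt.comp y (differentiableAt_negLogBase_add_negLogBase_div hy0)
  show σ < _
  rwa [← norm_ofReal_cpow_neg_lt_iff hb, cpow_neg_negLogBase_add_negLogBase_div hb hy0 hy0]

end Descent

theorem summable_norm_mul_pow_of_mk_mul_eq_one (hb : 1 < b) {G : ℂ → ℂ} {σ σ' : ℝ}
    (hG : AnalyticOnNhd ℂ G {s | σ < s.re}) (hGne : ∀ s, σ < s.re → G s ≠ 0) {c E : ℕ → ℂ}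
    (hc : 0 < (ofScalars ℂ c).radius)
    (hGc : ∀ s, σ' < s.re → G s = ofScalarsSum c ((b : ℂ) ^ (-s)))
    (hE : PowerSeries.mk E * PowerSeries.mk c = 1) {z : ℂ} (hz : ‖z‖ < b ^ (-σ)) :
    Summable fun j => ‖E j‖ * ‖z‖ ^ j := by
  set H := cpowNegDescent b (ofScalarsSum c) G
  have hb0 : 0 < b := by linarith
  have hF : HasFPowerSeriesAt (ofScalarsSum c) (ofScalars ℂ c) 0 :=
    ((ofScalars ℂ c).hasFPowerSeriesOnBall hc).hasFPowerSeriesAt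
  have hF0 : ofScalarsSum c (0 : ℂ) ≠ 0 := by
    have hconst := congr_arg PowerSeries.constantCoeff hE
    simp only [map_mul, PowerSeries.constantCoeff_mk, map_one] at hconst
    rw [ofScalarsSum_zero, smul_eq_mul, mul_one]
    exact right_ne_zero_of_mul_eq_one hconst
  have hHne : ∀ y ∈ Metric.ball (0 : ℂ) (b ^ (-σ)), H y ≠ 0 := fun y hy =>
    cpowNegDescent_ne_zero hb hF0 hGne (mem_ball_zero_iff.mp hy)
  have hHinv : DifferentiableOn ℂ (fun y => (H y)⁻¹) (Metric.ball 0 (b ^ (-σ))) :=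
    (differentiableOn_cpowNegDescent hb hGc hG hF.differentiableAt).inv hHne
  obtain ⟨R, hzR, hR⟩ := exists_between hz
  lift R to NNReal using (norm_nonneg z).trans hzR.le
  have hp := (hHinv.mono (Metric.closedBall_subset_ball hR)).hasFPowerSeriesOnBall
    ((norm_nonneg z).trans_lt hzR)
  have hFH : ∀ᶠ y in 𝓝 0, ofScalarsSum c y * (H y)⁻¹ = 1 := by
    filter_upwards [Metric.ball_mem_nhds (0 : ℂ) (Real.rpow_pos_of_pos hb0 (-σ')),
      Metric.ball_mem_nhds (0 : ℂ) (Real.rpow_pos_of_pos hb0 (-σ))] with y hy' hy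
    rw [← cpowNegDescent_eq_of_norm_lt hb hGc (mem_ball_zero_iff.mp hy'),
      mul_inv_cancel₀ (hHne y hy)]
  have hmk := PowerSeries.mk_coeff_mul_mk_coeff_eq_one hF hp.hasFPowerSeriesAt hFH
  rw [show (ofScalars ℂ c).coeff = c from funext fun _ => coeff_ofScalars] at hmk
  have hEp : E = (cauchyPowerSeries (fun y => (H y)⁻¹) 0 R).coeff := by
    funext j
    simpa using congr_arg (PowerSeries.coeff j) (left_inv_eq_right_inv hE hmk)
  rw [hEp]
  exact summable_norm_coeff_mul_pow _ (lt_of_lt_of_le (by exact_mod_cast hzR) hp.r_le)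

end Complex

theorem euler_factor_inverse_radius_general (q : ℕ) (hq : q.Prime) (a : ℕ → ℂ)
    (C lam : ℝ)
    (hgrowth : ∀ n : ℕ, 1 ≤ n → ‖a n‖ ≤ C * (n : ℝ) ^ lam)
    (E : ℕ → ℂ)
    (hinv : ∀ n : ℕ, (∑ i ∈ Finset.range (n + 1), E i * a (q ^ (n - i))) =
      if n = 0 then 1 else 0)
    (G : ℂ → ℂ)
    (hGanalytic : ∀ s : ℂ, (1 : ℝ) / 2 ≤ s.re → AnalyticAt ℂ G s)
    (hGne : ∀ s : ℂ, (1 : ℝ) / 2 ≤ s.re → G s ≠ 0)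
    (hGeq : ∀ s : ℂ, 1 + lam < s.re →
      G s = ∑' j : ℕ, a (q ^ j) * (q : ℂ) ^ (-(j : ℂ) * s)) :
    ∀ z : ℂ, ‖z‖ < (q : ℝ) ^ (-(1 : ℝ) / 2) →
      Summable fun j : ℕ => ‖E j‖ * ‖z‖ ^ j := by
  intro z hz
  have hq1 : (1 : ℝ) < q := by exact_mod_cast hq.one_lt
  have hc : 0 < (ofScalars ℂ fun j => a (q ^ j)).radius := by
    refine ofScalars_radius_pos_of_norm_le (C := C)
      (Real.rpow_pos_of_pos (by linarith : (0 : ℝ) < q) lam) fun j => ?_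
    rw [Real.rpow_pow_comm (by linarith)]
    exact_mod_cast hgrowth (q ^ j) (Nat.one_le_pow _ _ hq.pos)
  have hGc : ∀ s : ℂ, 1 + lam < s.re →
      G s = ofScalarsSum (fun j => a (q ^ j)) (((q : ℝ) : ℂ) ^ (-s)) := by
    intro s hs
    rw [hGeq s hs, ofScalars_sum_eq]
    refine tsum_congr fun j => ?_
    rw [ofReal_natCast, smul_eq_mul, ← cpow_nat_mul, neg_mul_comm]
  rw [neg_div] at hz
  exact summable_norm_mul_pow_of_mk_mul_eq_one hq1 (fun s hs => hGanalytic s hs.le)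
    (fun s hs => hGne s hs.le) hc hGc ((PowerSeries.mk_mul_mk_eq_one_iff _ _).mpr hinv) hz

/-- Let `(a_n)` be multiplicative with `|a_n| ≤ C n^λ`, `q` prime. If
`F_q(s) = ∑_j a_{q^j} q^{-js}` extends to a holomorphic nonvanishing function on
`Re(s) ≥ 1/2`, then the power series `E_q(z)` with `E_q(q^{-s}) = 1/F_q(s)`
(i.e. the formal inverse of `∑_j a_{q^j} z^j`) has radius of convergence at
least `q^{-1/2}`. -/
theorem euler_factor_inverse_radius (q : ℕ) (hq : q.Prime) (a : ℕ → ℂ)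
    (ha1 : a 1 = 1)
    (hmul : ∀ m n : ℕ, Nat.Coprime m n → a (m * n) = a m * a n)
    (C lam : ℝ) (hC : 0 < C) (hlam : 0 < lam)
    (hgrowth : ∀ n : ℕ, 1 ≤ n → ‖a n‖ ≤ C * (n : ℝ) ^ lam)
    (E : ℕ → ℂ)
    (hinv : ∀ n : ℕ, (∑ i ∈ Finset.range (n + 1), E i * a (q ^ (n - i))) =
      if n = 0 then 1 else 0)
    (G : ℂ → ℂ)
    (hGanalytic : ∀ s : ℂ, (1 : ℝ) / 2 ≤ s.re → AnalyticAt ℂ G s)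
    (hGne : ∀ s : ℂ, (1 : ℝ) / 2 ≤ s.re → G s ≠ 0)
    (hGeq : ∀ s : ℂ, 1 + lam < s.re →
      G s = ∑' j : ℕ, a (q ^ j) * (q : ℂ) ^ (-(j : ℂ) * s)) :
    ∀ z : ℂ, ‖z‖ < (q : ℝ) ^ (-(1 : ℝ) / 2) →
      Summable fun j : ℕ => ‖E j‖ * ‖z‖ ^ j :=
  euler_factor_inverse_radius_general q hq a C lam hgrowth E hinv G hGanalytic hGne hGeq
end

section
/- An entire function g: ℂ → ℂ that is periodic with period 2πi/log q (for q > 1) and satisfies g(s) = O(q^{2|Re(s)|}) as Re(s) → −∞ uniformly in Im(s), and is bounded on every right half-plane Re(s) ≥ σ₀, is of the form g(s) = E(q^{-s}) for a polynomial E of degree at most 2. -/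
/-!
Writing `w = q ^ (-s)`, periodicity makes `g` a single-valued function `G` of `w ≠ 0`.
Boundedness on right half-planes (`w → 0`) makes the singularity at `0` removable, so `G` is
entire, while the growth bound on left half-planes says `G w = O(‖w‖ ^ 2)` as `w → ∞`.
An entire function that is `O(‖w‖ ^ n)` is a polynomial of degree at most `n`: subtracting `G 0`
and dividing by `w` lowers the order by one, and order `0` is Liouville's theorem.
-/

open Complex Filter Asymptotics Bornology Polynomial

open scoped Real

theorem isBigO_one_pow_cobounded (m : ℕ) : (fun _ => (1 : ℂ)) =O[cobounded ℂ] (· ^ m) := by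
  refine IsBigO.of_bound 1 ?_
  filter_upwards [tendsto_norm_cobounded_atTop.eventually_ge_atTop 1] with z hz
  simpa using one_le_pow₀ hz

theorem isBigO_dslope_zero_of_isBigO_pow {F : ℂ → ℂ} {n : ℕ}
    (hF : F =O[cobounded ℂ] (· ^ (n + 1))) : dslope F 0 =O[cobounded ℂ] (· ^ n) := by
  have hsub : (fun z => F z - F 0) =O[cobounded ℂ] (· ^ (n + 1)) :=
    hF.sub ((isBigO_const_one ℂ (F 0) _).trans (isBigO_one_pow_cobounded _))
  refine ((isBigO_refl (·⁻¹) _).mul hsub).congr' ?_ ?_ <;>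
    filter_upwards [eventually_ne_cobounded 0] with z hz
  · rw [dslope_of_ne _ hz, slope_def_field, sub_zero, div_eq_inv_mul]
  · rw [pow_succ', inv_mul_cancel_left₀ hz]

theorem Differentiable.exists_polynomial_of_isBigO_pow {F : ℂ → ℂ} (hF : Differentiable ℂ F)
    {n : ℕ} (hgrowth : F =O[cobounded ℂ] (· ^ n)) :
    ∃ p : ℂ[X], p.natDegree ≤ n ∧ ∀ z, F z = p.eval z := by
  induction n generalizing F with
  | zero =>
    have hbdd : IsBounded (Set.range F) := hF.continuous.isBounded_range_iff_isBigO.2 <| by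
      rw [← Metric.cobounded_eq_cocompact]
      exact hgrowth.trans (isBigO_of_le _ (by simp))
    obtain ⟨c, hc⟩ := hF.exists_const_forall_eq_of_bounded hbdd
    exact ⟨C c, by simp, fun z => by simp [hc z]⟩
  | succ n ih =>
    have hdslope : Differentiable ℂ (dslope F 0) :=
      differentiableOn_univ.1 ((differentiableOn_dslope univ_mem).2 hF.differentiableOn)
    obtain ⟨p, hp, hFp⟩ := ih hdslope (isBigO_dslope_zero_of_isBigO_pow hgrowth)
    refine ⟨C (F 0) + X * p, ?_, fun z => ?_⟩
    · rw [natDegree_C_add]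
      exact natDegree_mul_le.trans (by linarith [natDegree_X_le (R := ℂ)])
    · have hslope := sub_smul_dslope F 0 z
      rw [sub_zero, smul_eq_mul, hFp] at hslope
      simp only [eval_add, eval_C, eval_mul, eval_X]
      linear_combination -hslope

theorem Function.Periodic.differentiable_cuspFunction {h : ℝ} {f : ℂ → ℂ} (hh : 0 < h)
    (hf : Function.Periodic f h) (hd : Differentiable ℂ f)
    (hb : BoundedAtFilter (comap im atTop) f) : Differentiable ℂ (cuspFunction h f) := by
  intro w
  rcases eq_or_ne w 0 with rfl | hw
  · exact differentiableAt_cuspFunction_zero hh hf (.of_forall hd) hb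
  · rw [← qParam_right_inv hh.ne' hw]
    exact differentiableAt_cuspFunction hh.ne' hf (hd _)

/-- The substitution `z = I * s` turns the period `2πi / log q` into the real period
`2π / log q` and right half-planes in `s` into neighbourhoods of `i∞` in `z`. -/
noncomputable def qCuspFunction (q : ℝ) (g : ℂ → ℂ) : ℂ → ℂ :=
  Function.Periodic.cuspFunction (2 * π / Real.log q) fun z => g (-I * z)

section

variable {q : ℝ} {g : ℂ → ℂ}

theorem Function.Periodic.comp_neg_I_mul (hper : Function.Periodic g (2 * π * I / Real.log q)) :
    Function.Periodic (fun z => g (-I * z)) ↑(2 * π / Real.log q) := by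
  intro z
  dsimp only
  rw [show -I * (z + ↑(2 * π / Real.log q)) = -I * z - 2 * π * I / Real.log q by
    push_cast; ring]
  exact hper.sub_eq _

theorem qCuspFunction_cpow_neg (hq : 1 < q) (hper : Function.Periodic g (2 * π * I / Real.log q))
    (s : ℂ) : qCuspFunction q g ((q : ℂ) ^ (-s)) = g s := by
  have hq0 : 0 < q := by linarith
  have hlog : (Real.log q : ℂ) ≠ 0 := by exact_mod_cast (Real.log_pos hq).ne'
  have hqParam : (q : ℂ) ^ (-s) = Function.Periodic.qParam (2 * π / Real.log q) (I * s) := by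
    rw [cpow_def_of_ne_zero (by exact_mod_cast hq0.ne'), ← ofReal_log hq0.le,
      Function.Periodic.qParam]
    congr 1
    push_cast
    field_simp
    rw [I_sq]
    ring
  rw [qCuspFunction, hqParam, Function.Periodic.eq_cuspFunction
    (div_pos Real.two_pi_pos (Real.log_pos hq)).ne' hper.comp_neg_I_mul, ← mul_assoc, neg_mul,
    I_mul_I, neg_neg, one_mul]

theorem exists_cpow_neg_eq (hq : 1 < q) {w : ℂ} (hw : w ≠ 0) : ∃ s : ℂ, (q : ℂ) ^ (-s) = w := by
  have hq0 : 0 < q := by linarith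
  have hlog : (Real.log q : ℂ) ≠ 0 := by exact_mod_cast (Real.log_pos hq).ne'
  refine ⟨-log w / Real.log q, ?_⟩
  rw [cpow_def_of_ne_zero (by exact_mod_cast hq0.ne'), ← ofReal_log hq0.le, neg_div, neg_neg,
    mul_div_cancel₀ _ hlog, exp_log hw]

theorem differentiable_qCuspFunction (hq : 1 < q)
    (hper : Function.Periodic g (2 * π * I / Real.log q)) (hg : Differentiable ℂ g)
    (hbdd : ∃ σ₀ B : ℝ, ∀ s : ℂ, σ₀ ≤ s.re → ‖g s‖ ≤ B) :
    Differentiable ℂ (qCuspFunction q g) := by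
  obtain ⟨σ₀, B, hB⟩ := hbdd
  refine hper.comp_neg_I_mul.differentiable_cuspFunction
    (div_pos Real.two_pi_pos (Real.log_pos hq)) (hg.comp (differentiable_id.const_mul _))
    (IsBigO.of_bound B ?_)
  filter_upwards [tendsto_comap.eventually_ge_atTop σ₀] with z hz
  simpa using hB _ (by simpa using hz)

theorem qCuspFunction_isBigO_pow (hq : 1 < q)
    (hper : Function.Periodic g (2 * π * I / Real.log q)) {C σ₁ : ℝ} {n : ℕ}
    (hleft : ∀ s : ℂ, s.re ≤ σ₁ → ‖g s‖ ≤ C * q ^ (n * |s.re|)) :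
    qCuspFunction q g =O[cobounded ℂ] (· ^ n) := by
  have hq0 : 0 < q := by linarith
  refine IsBigO.of_bound C ?_
  filter_upwards [tendsto_norm_cobounded_atTop.eventually_ge_atTop (max 1 (q ^ (-σ₁)))] with w hw
  have hw0 : w ≠ 0 := by
    rintro rfl
    norm_num at hw
  obtain ⟨s, rfl⟩ := exists_cpow_neg_eq hq hw0
  rw [norm_cpow_eq_rpow_re_of_pos hq0, neg_re, max_le_iff, ← Real.rpow_zero q,
    Real.rpow_le_rpow_left_iff hq, Real.rpow_le_rpow_left_iff hq] at hw
  rw [qCuspFunction_cpow_neg hq hper]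
  refine (hleft s (by linarith)).trans_eq ?_
  rw [norm_pow, norm_cpow_eq_rpow_re_of_pos hq0, neg_re, ← Real.rpow_natCast,
    ← Real.rpow_mul hq0.le, abs_of_nonpos (by linarith), mul_comm (-s.re)]

end

theorem periodic_entire_is_polynomial_in_qs_general (q : ℝ) (hq : 1 < q) (g : ℂ → ℂ)
    (hg : Differentiable ℂ g)
    (hper : ∀ s : ℂ, g (s + 2 * Real.pi * Complex.I / Real.log q) = g s)
    (C σ₁ : ℝ)
    (hleft : ∀ s : ℂ, s.re ≤ σ₁ → ‖g s‖ ≤ C * q ^ (2 * |s.re|))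
    (hright : ∀ σ₀ : ℝ, ∃ B : ℝ, ∀ s : ℂ, σ₀ ≤ s.re → ‖g s‖ ≤ B) :
    ∃ E : Polynomial ℂ, E.natDegree ≤ 2 ∧ ∀ s : ℂ, g s = E.eval ((q : ℂ) ^ (-s)) := by
  have hgrowth : qCuspFunction q g =O[cobounded ℂ] (· ^ 2) :=
    qCuspFunction_isBigO_pow (n := 2) hq hper (by exact_mod_cast hleft)
  have hentire : Differentiable ℂ (qCuspFunction q g) :=
    differentiable_qCuspFunction hq hper hg ⟨0, hright 0⟩
  obtain ⟨E, hdeg, hE⟩ := hentire.exists_polynomial_of_isBigO_pow hgrowth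
  exact ⟨E, hdeg, fun s => by rw [← hE, qCuspFunction_cpow_neg hq hper]⟩

/-- An entire function `g`, periodic with period `2πi/log q` (`q > 1`), with
`g(s) = O(q^{2|Re(s)|})` as `Re(s) → −∞` and bounded on every right half-plane,
is of the form `g(s) = E(q^{-s})` for a polynomial `E` of degree at most 2. -/
theorem periodic_entire_is_polynomial_in_qs (q : ℝ) (hq : 1 < q) (g : ℂ → ℂ)
    (hg : Differentiable ℂ g)
    (hper : ∀ s : ℂ, g (s + 2 * Real.pi * Complex.I / Real.log q) = g s)
    (C σ₁ : ℝ) (hC : 0 < C)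
    (hleft : ∀ s : ℂ, s.re ≤ σ₁ → ‖g s‖ ≤ C * q ^ (2 * |s.re|))
    (hright : ∀ σ₀ : ℝ, ∃ B : ℝ, ∀ s : ℂ, σ₀ ≤ s.re → ‖g s‖ ≤ B) :
    ∃ E : Polynomial ℂ, E.natDegree ≤ 2 ∧ ∀ s : ℂ, g s = E.eval ((q : ℂ) ^ (-s)) :=
  periodic_entire_is_polynomial_in_qs_general q hq g hg hper C σ₁ hleft hright
end

section
/- Let D(s) = ∑_{n≥1} c_n n^{-s} be a nonzero Dirichlet polynomial (finitely many c_n nonzero) with no zeros in ℂ. Then D(s) = c_m·m^{-s} for a single index m, i.e., exactly one coefficient is nonzero. In particular, if additionally c_1 = 1 and D is zero-free, then D ≡ 1. -/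
/-!
A zero-free entire function `D` with `‖D z‖ ≤ C exp (B ‖z‖)` has a holomorphic logarithm `g`
(a primitive of `D' / D`), whose real part `log ‖D‖` grows at most linearly. By
Borel–Carathéodory, so does `‖g‖`; the Cauchy estimate then bounds `g'`, and Liouville makes `g`
affine: `D z = exp (a + b z)`.
Writing `n ^ (-s) = exp (-log n * s)`, a zero-free Dirichlet polynomial is such a function, and
Dedekind's independence of the characters `z ↦ exp (μ z)` forces every coefficient with
`-log n ≠ b` to vanish.
-/

open Complex Finset Metric

theorem linearIndependent_cexp_mul :
    LinearIndependent ℂ (fun μ : ℂ => fun z : ℂ => cexp (μ * z)) := by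
  refine (linearIndependent_monoidHom (Multiplicative ℂ) ℂ).comp
    (fun μ => expMonoidHom.comp (AddMonoidHom.mulLeft μ).toMultiplicative) fun μ ν h => ?_
  have hz : ∀ z : ℂ, cexp ((μ - ν) * z) = 1 := fun z => by
    rw [sub_mul, exp_sub, div_eq_one_iff_eq (exp_ne_zero _)]
    exact DFunLike.congr_fun h (Multiplicative.ofAdd z)
  by_contra hne
  have := hz (μ - ν)⁻¹
  rw [mul_inv_cancel₀ (sub_ne_zero.mpr hne), ← ofReal_one, ← ofReal_exp, ofReal_inj,
    Real.exp_eq_one_iff] at this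
  exact one_ne_zero this

theorem eq_ite_of_sum_mul_cexp_eq {ι : Type*} {s : Finset ι} {μ : ι → ℂ}
    (hμ : Set.InjOn μ s) {c : ι → ℂ} {a b : ℂ}
    (h : ∀ z, ∑ i ∈ s, c i * cexp (μ i * z) = a * cexp (b * z)) {i : ι} (hi : i ∈ s) :
    c i = if b = μ i then a else 0 := by
  have hF : ∑ j ∈ s, Finsupp.single (μ j) (c j) = Finsupp.single b a :=
    linearIndependent_cexp_mul.finsuppLinearCombination_injective <| by
      ext z
      simp [map_sum, Finsupp.linearCombination_single, h]
  have := DFunLike.congr_fun hF (μ i)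
  rwa [Finsupp.finsetSum_apply, Finset.sum_eq_single_of_mem i hi, Finsupp.single_eq_same,
    Finsupp.single_apply] at this
  intro j hj hji
  rw [Finsupp.single_apply, if_neg fun h => hji (hμ hj hi h)]

theorem exists_differentiable_eq_cexp_of_ne_zero {f : ℂ → ℂ} (hf : Differentiable ℂ f)
    (hf0 : ∀ z, f z ≠ 0) : ∃ g : ℂ → ℂ, Differentiable ℂ g ∧ ∀ z, f z = cexp (g z) := by
  obtain ⟨g, hg0, hg⟩ :=
    ((hf.deriv.div hf hf0).isExactOn_univ).with_val_at 0 (log (f 0))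
  have hg' : ∀ z, HasDerivAt g (deriv f z / f z) z := fun z => hg z trivial
  have hconst : ∀ z, HasDerivAt (fun w => f w * cexp (-g w)) 0 z := fun z => by
    refine ((hf z).hasDerivAt.fun_mul (hg' z).fun_neg.cexp).congr_deriv ?_
    field_simp [hf0 z]
    ring
  refine ⟨g, fun z => (hg' z).differentiableAt, fun z => ?_⟩
  have h := is_const_of_deriv_eq_zero (fun w => (hconst w).differentiableAt)
    (fun w => (hconst w).deriv) z 0
  rwa [hg0, exp_neg, exp_neg, exp_log (hf0 0), mul_inv_cancel₀ (hf0 0),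
    mul_inv_eq_one₀ (exp_ne_zero _)] at h

theorem norm_le_of_re_le_add_mul_norm {g : ℂ → ℂ} (hg : Differentiable ℂ g) {A B : ℝ}
    (hB : 0 ≤ B) (hre : ∀ z, (g z).re ≤ A + B * ‖z‖) (z : ℂ) :
    ‖g z‖ ≤ 2 * (|A| + B + 1) + 3 * ‖g 0‖ + 4 * B * ‖z‖ := by
  set R := 2 * ‖z‖ + 1
  set M := |A| + B * R + 1
  have hz : z ∈ ball 0 R := mem_ball_zero_iff.mpr (by linarith [norm_nonneg z])
  have hmaps : Set.MapsTo g (ball 0 R) {w | w.re ≤ M} := fun w hw => by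
    have : B * ‖w‖ ≤ B * R := by gcongr; exact (mem_ball_zero_iff.mp hw).le
    simp only [Set.mem_ofPred_eq]
    linarith [hre w, le_abs_self A]
  have hbc := borelCaratheodory (by positivity) hg.differentiableOn hmaps (by positivity) hz
  have hR : R - ‖z‖ = ‖z‖ + 1 := by ring
  rw [hR] at hbc
  have h1 : 2 * M * ‖z‖ / (‖z‖ + 1) ≤ 2 * M := by
    rw [div_le_iff₀ (by positivity)]; nlinarith [norm_nonneg z, (by positivity : 0 ≤ M)]
  have h2 : ‖g 0‖ * (R + ‖z‖) / (‖z‖ + 1) ≤ 3 * ‖g 0‖ := by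
    rw [div_le_iff₀ (by positivity)]; nlinarith [norm_nonneg z, norm_nonneg (g 0)]
  linarith

theorem exists_eq_add_mul_of_norm_le_add_mul_norm {g : ℂ → ℂ} (hg : Differentiable ℂ g)
    {α β : ℝ} (hβ : 0 ≤ β) (hbound : ∀ z, ‖g z‖ ≤ α + β * ‖z‖) :
    ∃ a b : ℂ, ∀ z, g z = a + b * z := by
  have hα : 0 ≤ α := by simpa using (norm_nonneg _).trans (hbound 0)
  have hderiv : ∀ c, ‖deriv g c‖ ≤ α + 2 * β := fun c => by
    have hR : (0 : ℝ) < ‖c‖ + 1 := by positivity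
    refine (norm_deriv_le_of_forall_mem_sphere_norm_le hR hg.diffContOnCl
      (C := α + β * (2 * ‖c‖ + 1)) fun z hz => ?_).trans ?_
    · have : ‖z‖ ≤ 2 * ‖c‖ + 1 := by
        have := norm_le_norm_add_norm_sub' z c
        rw [mem_sphere_iff_norm.mp hz] at this
        linarith
      linarith [hbound z, mul_le_mul_of_nonneg_left this hβ]
    · rw [div_le_iff₀ hR]
      nlinarith [norm_nonneg c]
  obtain ⟨b, hb⟩ := hg.deriv.exists_const_forall_eq_of_bounded
    (isBounded_iff_forall_norm_le.mpr ⟨_, Set.forall_mem_range.mpr hderiv⟩)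
  have hlin : ∀ z, HasDerivAt (fun w => g w - b * w) 0 z := fun z => by
    simpa [hb z] using (hg z).hasDerivAt.fun_sub ((hasDerivAt_id z).const_mul b)
  refine ⟨g 0, b, fun z => ?_⟩
  have := is_const_of_deriv_eq_zero (fun w => (hlin w).differentiableAt)
    (fun w => (hlin w).deriv) z 0
  linear_combination this

theorem exists_eq_cexp_add_mul_of_norm_le {f : ℂ → ℂ} (hf : Differentiable ℂ f)
    (hf0 : ∀ z, f z ≠ 0) {C B : ℝ} (hB : 0 ≤ B)
    (hbound : ∀ z, ‖f z‖ ≤ C * Real.exp (B * ‖z‖)) :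
    ∃ a b : ℂ, ∀ z, f z = cexp (a + b * z) := by
  obtain ⟨g, hg, hfg⟩ := exists_differentiable_eq_cexp_of_ne_zero hf hf0
  have hC : 0 < C := by
    have := (norm_pos_iff.mpr (hf0 0)).trans_le (hbound 0)
    simpa using this
  have hre : ∀ z, (g z).re ≤ Real.log C + B * ‖z‖ := fun z => by
    rw [← Real.exp_le_exp, Real.exp_add, Real.exp_log hC, ← norm_exp, ← hfg]
    exact hbound z
  obtain ⟨a, b, hab⟩ := exists_eq_add_mul_of_norm_le_add_mul_norm hg (by positivity)
    (norm_le_of_re_le_add_mul_norm hg hB hre)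
  exact ⟨a, b, fun z => by rw [hfg, hab]⟩

theorem norm_sum_mul_cexp_le {ι : Type*} (s : Finset ι) (c μ : ι → ℂ) (z : ℂ) :
    ‖∑ i ∈ s, c i * cexp (μ i * z)‖ ≤
      (∑ i ∈ s, ‖c i‖) * Real.exp ((∑ i ∈ s, ‖μ i‖) * ‖z‖) := by
  rw [Finset.sum_mul]
  refine (norm_sum_le _ _).trans (Finset.sum_le_sum fun i hi => ?_)
  rw [norm_mul]
  gcongr
  calc ‖cexp (μ i * z)‖ ≤ Real.exp ‖μ i * z‖ := norm_exp_le_exp_norm _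
    _ ≤ Real.exp ((∑ i ∈ s, ‖μ i‖) * ‖z‖) := by
      rw [norm_mul]
      gcongr
      exact Finset.single_le_sum (fun j _ => norm_nonneg (μ j)) hi

theorem exists_eq_single_of_sum_mul_cexp_ne_zero {ι : Type*} {s : Finset ι} {μ : ι → ℂ}
    (hμ : Set.InjOn μ s) {c : ι → ℂ} (hne : ∀ z, ∑ i ∈ s, c i * cexp (μ i * z) ≠ 0) :
    ∃ i ∈ s, c i ≠ 0 ∧ ∀ j ∈ s, j ≠ i → c j = 0 := by
  have hdiff : Differentiable ℂ fun z => ∑ i ∈ s, c i * cexp (μ i * z) := by fun_prop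
  obtain ⟨a, b, hab⟩ := exists_eq_cexp_add_mul_of_norm_le hdiff hne (by positivity)
    (norm_sum_mul_cexp_le s c μ)
  have hcoeff : ∀ i ∈ s, c i = if b = μ i then cexp a else 0 := fun i =>
    eq_ite_of_sum_mul_cexp_eq hμ fun z => by rw [hab, exp_add]
  obtain ⟨i, hi, hci⟩ := Finset.exists_ne_zero_of_sum_ne_zero (by simpa using hne 0)
  have hb : b = μ i := by
    by_contra h
    exact hci (by rw [hcoeff i hi, if_neg h])
  refine ⟨i, hi, by simpa using hci, fun j hj hji => ?_⟩
  rw [hcoeff j hj, if_neg (hb ▸ fun h => hji (hμ hj hi h.symm))]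

theorem natCast_cpow_neg_eq_cexp {n : ℕ} (hn : n ≠ 0) (s : ℂ) :
    (n : ℂ) ^ (-s) = cexp (-log n * s) := by
  rw [cpow_def_of_ne_zero (Nat.cast_ne_zero.mpr hn), neg_mul, mul_neg]

theorem injOn_neg_log_natCast (s : Set ℕ) (hs : 0 ∉ s) :
    Set.InjOn (fun n : ℕ => -log (n : ℂ)) s := fun m hm n hn h => by
  have hm0 : (m : ℂ) ≠ 0 := Nat.cast_ne_zero.mpr (ne_of_mem_of_not_mem hm hs)
  have hn0 : (n : ℂ) ≠ 0 := Nat.cast_ne_zero.mpr (ne_of_mem_of_not_mem hn hs)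
  have := congrArg cexp (neg_inj.mp h)
  rwa [exp_log hm0, exp_log hn0, Nat.cast_inj] at this

theorem zero_free_dirichlet_polynomial_is_monomial_general (K : ℕ)
    (c : ℕ → ℂ) (D : ℂ → ℂ)
    (hD : ∀ s : ℂ, D s = ∑ n ∈ Finset.Icc 1 K, c n * (n : ℂ) ^ (-s))
    (hzf : ∀ s : ℂ, D s ≠ 0) :
    (∃ m ∈ Finset.Icc 1 K, c m ≠ 0 ∧
        (∀ n ∈ Finset.Icc 1 K, n ≠ m → c n = 0) ∧
        ∀ s : ℂ, D s = c m * (m : ℂ) ^ (-s)) ∧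
      (c 1 = 1 → ∀ s : ℂ, D s = 1) := by
  have hexp : ∀ s, D s = ∑ n ∈ Icc 1 K, c n * cexp (-log n * s) := fun s => by
    rw [hD]
    refine sum_congr rfl fun n hn => ?_
    rw [natCast_cpow_neg_eq_cexp (by grind) s]
  obtain ⟨m, hm, hcm, hzero⟩ := exists_eq_single_of_sum_mul_cexp_ne_zero
    (injOn_neg_log_natCast _ (by simp)) fun s => hexp s ▸ hzf s
  have hmono : ∀ s, D s = c m * (m : ℂ) ^ (-s) := fun s => by
    rw [hD, sum_eq_single_of_mem m hm fun n hn hnm => by rw [hzero n hn hnm, zero_mul]]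
  refine ⟨⟨m, hm, hcm, hzero, hmono⟩, fun hc1 s => ?_⟩
  have hm1 : m = 1 := by
    by_contra h
    exact one_ne_zero (hc1 ▸ hzero 1 (by grind) (Ne.symm h))
  rw [hmono, hm1, hc1, Nat.cast_one, one_cpow, one_mul]

/-- A nonzero Dirichlet polynomial `D(s) = ∑_{n=1}^K c_n n^{-s}` with no zeros
in `ℂ` is a monomial `c_m m^{-s}`: exactly one coefficient is nonzero. If
additionally `c_1 = 1`, then `D ≡ 1`. -/
theorem zero_free_dirichlet_polynomial_is_monomial (K : ℕ) (hK : 0 < K)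
    (c : ℕ → ℂ) (D : ℂ → ℂ)
    (hD : ∀ s : ℂ, D s = ∑ n ∈ Finset.Icc 1 K, c n * (n : ℂ) ^ (-s))
    (hzf : ∀ s : ℂ, D s ≠ 0) :
    (∃ m ∈ Finset.Icc 1 K, c m ≠ 0 ∧
        (∀ n ∈ Finset.Icc 1 K, n ≠ m → c n = 0) ∧
        ∀ s : ℂ, D s = c m * (m : ℂ) ^ (-s)) ∧
      (c 1 = 1 → ∀ s : ℂ, D s = 1) :=
  zero_free_dirichlet_polynomial_is_monomial_general K c D hD hzf
end
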